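/- arXiv:2404.17563 — 5 statements merged into one kernel-verified Lean document; each statement's English description precedes it below -/
import Mathlib

section
/- Let S > 0, η > 0, c > 0, and suppose a(t), b(t) satisfy a'(t) = −ηc·b(t)(a(t)b(t) − S), b'(t) = −ηc·a(t)(a(t)b(t) − S) with a(0) = b(0) and 0 < a(0)b(0) < S. Then a(t) = b(t) for all t ≥ 0, and R(t) := a(t)b(t) satisfies R'(t) = −2ηc·R(t)(R(t) − S), hence R(t) = S / (1 + (S/R(0) − 1)exp(−2ηcSt)). -/
/-!
Both `(a, b)` and `(b, a)` solve the gradient-flow system, which is invariant under swapping the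
two parameters, and they start at the same point; since the vector field is polynomial, hence
locally Lipschitz, uniqueness of solutions forces `a = b`. Then `R = a b` solves the logistic
equation `R' = -2ηc R (R - S)`, and so does the explicit logistic curve with the same initial
value, so uniqueness again identifies them.
-/

open Set Real

/-- On `[t₀, T]` both trajectories stay in a compact set, on which `v` is Lipschitz. -/
theorem LocallyLipschitz.ODE_solution_unique_Ici {E : Type*} [NormedAddCommGroup E]
    [NormedSpace ℝ E] {v : E → E} (hv : LocallyLipschitz v) {f g : ℝ → E} {t₀ : ℝ}
    (hf : ∀ t ≥ t₀, HasDerivAt f (v (f t)) t) (hg : ∀ t ≥ t₀, HasDerivAt g (v (g t)) t)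
    (h₀ : f t₀ = g t₀) :
    EqOn f g (Ici t₀) := by
  intro T hT
  have hfc : ContinuousOn f (Icc t₀ T) := fun t ht => (hf t ht.1).continuousAt.continuousWithinAt
  have hgc : ContinuousOn g (Icc t₀ T) := fun t ht => (hg t ht.1).continuousAt.continuousWithinAt
  set K := f '' Icc t₀ T ∪ g '' Icc t₀ T
  have hK : IsCompact K :=
    (isCompact_Icc.image_of_continuousOn hfc).union (isCompact_Icc.image_of_continuousOn hgc)
  obtain ⟨L, hL⟩ := hv.locallyLipschitzOn.exists_lipschitzOnWith_of_compact hK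
  exact ODE_solution_unique_of_mem_Icc_right (s := fun _ => K) (fun _ _ => hL) hfc
    (fun t ht => (hf t ht.1).hasDerivWithinAt)
    (fun t ht => Or.inl (mem_image_of_mem f (Ico_subset_Icc_self ht))) hgc
    (fun t ht => (hg t ht.1).hasDerivWithinAt)
    (fun t ht => Or.inr (mem_image_of_mem g (Ico_subset_Icc_self ht))) h₀ ⟨hT, le_rfl⟩

/-- The negative gradient of `(κ/2) (S - x y)²`, with `κ = η c`. -/
def bilinearGradientFlow (κ S : ℝ) (p : ℝ × ℝ) : ℝ × ℝ :=
  (-(κ * p.2 * (p.1 * p.2 - S)), -(κ * p.1 * (p.1 * p.2 - S)))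

theorem bilinearGradientFlow_swap (κ S : ℝ) (p : ℝ × ℝ) :
    bilinearGradientFlow κ S p.swap = (bilinearGradientFlow κ S p).swap := by
  simp only [bilinearGradientFlow, Prod.fst_swap, Prod.snd_swap, Prod.swap_prod_mk,
    mul_comm p.2 p.1]

theorem locallyLipschitz_bilinearGradientFlow (κ S : ℝ) :
    LocallyLipschitz (bilinearGradientFlow κ S) :=
  ContDiff.locallyLipschitz (show ContDiff ℝ 1 _ by unfold bilinearGradientFlow; fun_prop)

noncomputable def logistic (k S R₀ t : ℝ) : ℝ :=
  S / (1 + (S / R₀ - 1) * exp (-k * S * t))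

theorem logistic_zero (k : ℝ) {S : ℝ} (hS : S ≠ 0) (R₀ : ℝ) : logistic k S R₀ 0 = R₀ := by
  simp [logistic, hS]

theorem hasDerivAt_logistic (k : ℝ) {S R₀ : ℝ} (h₀ : 0 < R₀) (hR₀S : R₀ ≤ S) (t : ℝ) :
    HasDerivAt (logistic k S R₀) (-(k * logistic k S R₀ t * (logistic k S R₀ t - S))) t := by
  set C := S / R₀ - 1
  have hC : 0 ≤ C := sub_nonneg.mpr ((one_le_div h₀).mpr hR₀S)
  have hden : 0 < 1 + C * exp (-k * S * t) := by positivity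
  have hexp : HasDerivAt (fun t => exp (-k * S * t)) (exp (-k * S * t) * (-k * S)) t := by
    simpa using ((hasDerivAt_id t).const_mul (-k * S)).exp
  refine ((hasDerivAt_const t S).div ((hexp.const_mul C).const_add 1) hden.ne').congr_deriv ?_
  change _ = -(k * (S / (1 + C * exp (-k * S * t))) * (S / (1 + C * exp (-k * S * t)) - S))
  field_simp
  ring

theorem stmt_1_general (S η c : ℝ)
    (a b : ℝ → ℝ)
    (ha : ∀ t ≥ (0:ℝ), HasDerivAt a (-(η * c * b t * (a t * b t - S))) t)
    (hb : ∀ t ≥ (0:ℝ), HasDerivAt b (-(η * c * a t * (a t * b t - S))) t)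
    (hab0 : a 0 = b 0) (h0 : 0 < a 0 * b 0) (h0S : a 0 * b 0 < S) :
    (∀ t ≥ (0:ℝ), a t = b t) ∧
    (∀ t ≥ (0:ℝ), HasDerivAt (fun s => a s * b s)
      (-(2 * η * c * (a t * b t) * (a t * b t - S))) t) ∧
    (∀ t ≥ (0:ℝ), a t * b t =
      S / (1 + (S / (a 0 * b 0) - 1) * Real.exp (-2 * η * c * S * t))) := by
  have hflow : ∀ t ≥ (0:ℝ),
      HasDerivAt (fun s => (a s, b s)) (bilinearGradientFlow (η * c) S (a t, b t)) t :=
    fun t ht => (ha t ht).prodMk (hb t ht)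
  have hswap : ∀ t ≥ (0:ℝ),
      HasDerivAt (fun s => (b s, a s)) (bilinearGradientFlow (η * c) S (b t, a t)) t := by
    intro t ht
    rw [← Prod.swap_prod_mk, bilinearGradientFlow_swap]
    exact (hb t ht).prodMk (ha t ht)
  have hsym : ∀ t ≥ (0:ℝ), a t = b t := fun t ht =>
    congrArg Prod.fst ((locallyLipschitz_bilinearGradientFlow (η * c) S).ODE_solution_unique_Ici
      hflow hswap (by rw [hab0]) ht)
  have hR : ∀ t ≥ (0:ℝ), HasDerivAt (fun s => a s * b s)
      (-(2 * η * c * (a t * b t) * (a t * b t - S))) t := by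
    intro t ht
    refine ((ha t ht).mul (hb t ht)).congr_deriv ?_
    rw [hsym t ht]
    ring
  refine ⟨hsym, hR, fun t ht => ?_⟩
  have hfield : LocallyLipschitz fun x : ℝ => -(2 * η * c * x * (x - S)) :=
    ContDiff.locallyLipschitz (show ContDiff ℝ 1 _ by fun_prop)
  have := hfield.ODE_solution_unique_Ici hR
    (fun t _ => hasDerivAt_logistic (2 * η * c) h0 h0S.le t)
    (logistic_zero _ (h0.trans h0S).ne' _).symm ht
  simpa [logistic, neg_mul] using this

theorem stmt_1 (S η c : ℝ) (hS : 0 < S) (hη : 0 < η) (hc : 0 < c)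
    (a b : ℝ → ℝ)
    (ha : ∀ t ≥ (0:ℝ), HasDerivAt a (-(η * c * b t * (a t * b t - S))) t)
    (hb : ∀ t ≥ (0:ℝ), HasDerivAt b (-(η * c * a t * (a t * b t - S))) t)
    (hab0 : a 0 = b 0) (h0 : 0 < a 0 * b 0) (h0S : a 0 * b 0 < S) :
    (∀ t ≥ (0:ℝ), a t = b t) ∧
    (∀ t ≥ (0:ℝ), HasDerivAt (fun s => a s * b s)
      (-(2 * η * c * (a t * b t) * (a t * b t - S))) t) ∧
    (∀ t ≥ (0:ℝ), a t * b t =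
      S / (1 + (S / (a 0 * b 0) - 1) * Real.exp (-2 * η * c * S * t))) :=
  stmt_1_general S η c a b ha hb hab0 h0 h0S
end

section
/- Fix S > 0, 0 < r < S, η > 0, T > 0, and define F(z) = S² / (2(1 + (S/r − 1)⁻¹·e^{2ηSTz})²). Then for all z ∈ ℝ, |F''(z)| < 8S⁴η²T². -/
/-!
With `u = c e^{a z}` one has `u' = a u`, so `G = K / (2 (1 + u)²)` has
`G' = -K a u / (1 + u)³` and `G'' = K a² u (2u - 1) / (1 + u)⁴`. For `u ≥ 0` the polynomial
bound `u |2u - 1| ≤ 2u² + u < (1 + u)⁴` gives `|G''| < K a²`; the theorem is the case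
`K = S²`, `a = 2ηST`, `c = (S/r - 1)⁻¹`, where `K a² = 4 S⁴ η² T²`.
-/

open Real

section
variable {K a c : ℝ}

lemma hasDerivAt_mul_exp_mul (a c x : ℝ) :
    HasDerivAt (fun y => c * exp (a * y)) (a * (c * exp (a * x))) x := by
  have h := (((hasDerivAt_id x).const_mul a).exp).const_mul c
  simp only [id, mul_one] at h
  exact h.congr_deriv (by ring)

lemma hasDerivAt_div_sq_one_add_mul_exp (hc : 0 ≤ c) (x : ℝ) :
    HasDerivAt (fun y => K / (2 * (1 + c * exp (a * y)) ^ 2))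
      (-(K * a * (c * exp (a * x))) / (1 + c * exp (a * x)) ^ 3) x := by
  have hden : HasDerivAt (fun y => 2 * (1 + c * exp (a * y)) ^ 2)
      (2 * (2 * (1 + c * exp (a * x)) * (a * (c * exp (a * x))))) x := by
    simpa using (((hasDerivAt_mul_exp_mul a c x).const_add 1).pow 2).const_mul 2
  refine ((hasDerivAt_const x K).div hden (by positivity)).congr_deriv ?_
  field_simp
  ring

lemma hasDerivAt_neg_div_cube_one_add_mul_exp (hc : 0 ≤ c) (x : ℝ) :
    HasDerivAt (fun y => -(K * a * (c * exp (a * y))) / (1 + c * exp (a * y)) ^ 3)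
      (K * a ^ 2 * (c * exp (a * x)) * (2 * (c * exp (a * x)) - 1) /
        (1 + c * exp (a * x)) ^ 4) x := by
  have hnum : HasDerivAt (fun y => -(K * a * (c * exp (a * y))))
      (-(K * a * (a * (c * exp (a * x))))) x :=
    ((hasDerivAt_mul_exp_mul a c x).const_mul (K * a)).neg
  have hden : HasDerivAt (fun y => (1 + c * exp (a * y)) ^ 3)
      (3 * (1 + c * exp (a * x)) ^ 2 * (a * (c * exp (a * x)))) x :=
    ((hasDerivAt_mul_exp_mul a c x).const_add 1).pow 3
  refine (hnum.div hden (by positivity)).congr_deriv ?_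
  field_simp
  ring

lemma iteratedDeriv_two_div_sq_one_add_mul_exp (hc : 0 ≤ c) (x : ℝ) :
    iteratedDeriv 2 (fun y => K / (2 * (1 + c * exp (a * y)) ^ 2)) x =
      K * a ^ 2 * (c * exp (a * x)) * (2 * (c * exp (a * x)) - 1) /
        (1 + c * exp (a * x)) ^ 4 := by
  have hderiv : deriv (fun y => K / (2 * (1 + c * exp (a * y)) ^ 2)) =
      fun y => -(K * a * (c * exp (a * y))) / (1 + c * exp (a * y)) ^ 3 :=
    funext fun y => (hasDerivAt_div_sq_one_add_mul_exp hc y).deriv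
  rw [iteratedDeriv_succ, iteratedDeriv_one, hderiv]
  exact (hasDerivAt_neg_div_cube_one_add_mul_exp hc x).deriv

end

lemma abs_mul_two_mul_sub_one_lt_one_add_pow_four {v : ℝ} (hv : 0 ≤ v) :
    |v * (2 * v - 1)| < (1 + v) ^ 4 := by
  rw [abs_mul, abs_of_nonneg hv]
  have h : |2 * v - 1| ≤ 2 * v + 1 := abs_le.mpr ⟨by linarith, by linarith⟩
  calc v * |2 * v - 1| ≤ v * (2 * v + 1) := mul_le_mul_of_nonneg_left h hv
    _ < (1 + v) ^ 4 := by nlinarith [sq_nonneg v, pow_nonneg hv 3, pow_nonneg hv 4]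

lemma abs_iteratedDeriv_two_div_sq_one_add_mul_exp_lt {K a c : ℝ} (hK : 0 < K) (ha : a ≠ 0)
    (hc : 0 ≤ c) (x : ℝ) :
    |iteratedDeriv 2 (fun y => K / (2 * (1 + c * exp (a * y)) ^ 2)) x| < K * a ^ 2 := by
  have hv : 0 ≤ c * exp (a * x) := by positivity
  rw [iteratedDeriv_two_div_sq_one_add_mul_exp hc, mul_assoc, abs_div, abs_mul,
    abs_of_pos (by positivity : 0 < K * a ^ 2),
    abs_of_pos (by positivity : 0 < (1 + c * exp (a * x)) ^ 4), div_lt_iff₀ (by positivity)]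
  exact mul_lt_mul_of_pos_left (abs_mul_two_mul_sub_one_lt_one_add_pow_four hv) (by positivity)

theorem stmt_3 (S r η T : ℝ) (hS : 0 < S) (hr : 0 < r) (hrS : r < S)
    (hη : 0 < η) (hT : 0 < T)
    (F : ℝ → ℝ)
    (hF : F = fun z => S ^ 2 / (2 * (1 + (S / r - 1)⁻¹ * Real.exp (2 * η * S * T * z)) ^ 2)) :
    ∀ z : ℝ, |iteratedDeriv 2 F z| < 8 * S ^ 4 * η ^ 2 * T ^ 2 := by
  intro z
  have hc : 0 ≤ (S / r - 1)⁻¹ := by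
    have : 1 < S / r := (one_lt_div hr).mpr hrS
    exact inv_nonneg.mpr (by linarith)
  have h := abs_iteratedDeriv_two_div_sq_one_add_mul_exp_lt (pow_pos hS 2)
    (by positivity : 2 * η * S * T ≠ 0) hc z
  subst hF
  have hpos : 0 < S ^ 4 * η ^ 2 * T ^ 2 := by positivity
  calc _ < S ^ 2 * (2 * η * S * T) ^ 2 := h
    _ = 4 * (S ^ 4 * η ^ 2 * T ^ 2) := by ring
    _ < 8 * S ^ 4 * η ^ 2 * T ^ 2 := by linarith
end

section
/- Fix S > 0, 0 < r < S, η > 0, T > 0, and define F(z) = S² / (2(1 + (S/r − 1)⁻¹·e^{2ηSTz})²). Then for all z ≥ 0: (S−r)²/2 − (8ηS³T/27)·z ≤ F(z) ≤ (S−r)²/2. -/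
/-! With `t = a e^{cz}`, the function `A / (1 + t)²` has derivative `-2Ac · t / (1 + t)³` in `z`.
It is therefore decreasing, which gives the upper bound, and its slope is at least `-8Ac/27`,
because `t / (1 + t)³` peaks at `t = 1/2` (the inflection point), which gives the lower bound. -/

open Real

theorem div_one_add_pow_three_le {t : ℝ} (ht : 0 ≤ t) : t / (1 + t) ^ 3 ≤ 4 / 27 := by
  rw [div_le_div_iff₀ (by positivity) (by norm_num)]
  -- `4 (1 + t)³ - 27 t = (2t - 1)² (t + 4)`
  nlinarith [mul_nonneg (sq_nonneg (2 * t - 1)) (by linarith : 0 ≤ t + 4)]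

section ExpDecay

variable {A a c : ℝ}

theorem hasDerivAt_div_one_add_mul_exp_sq (ha : 0 ≤ a) (z : ℝ) :
    HasDerivAt (fun z => A / (1 + a * exp (c * z)) ^ 2)
      (-(2 * A * c) * (a * exp (c * z) / (1 + a * exp (c * z)) ^ 3)) z := by
  have hpos : 0 < 1 + a * exp (c * z) := by positivity
  have hinner : HasDerivAt (fun z => 1 + a * exp (c * z)) (a * (exp (c * z) * c)) z :=
    (((hasDerivAt_id z).const_mul c).exp.const_mul a).const_add 1 |>.congr_deriv (by simp)
  refine ((hasDerivAt_const z A).fun_div (hinner.fun_pow 2) (by positivity)).congr_deriv ?_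
  field_simp
  ring

theorem div_one_add_mul_exp_sq_le (hA : 0 ≤ A) (ha : 0 ≤ a) (hc : 0 ≤ c) {z : ℝ} (hz : 0 ≤ z) :
    A / (1 + a * exp (c * z)) ^ 2 ≤ A / (1 + a) ^ 2 := by
  have : 1 ≤ exp (c * z) := one_le_exp (by positivity)
  gcongr
  nlinarith

theorem sub_le_div_one_add_mul_exp_sq (hA : 0 ≤ A) (ha : 0 ≤ a) (hc : 0 ≤ c) {z : ℝ}
    (hz : 0 ≤ z) :
    A / (1 + a) ^ 2 - 8 * A * c / 27 * z ≤ A / (1 + a * exp (c * z)) ^ 2 := by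
  have hderiv (w : ℝ) := (hasDerivAt_div_one_add_mul_exp_sq (A := A) (c := c) ha w).fun_add
    ((hasDerivAt_id' w).const_mul (8 * A * c / 27))
  have hmono : Monotone fun w => A / (1 + a * exp (c * w)) ^ 2 + 8 * A * c / 27 * w := by
    refine monotone_of_deriv_nonneg (fun w => (hderiv w).differentiableAt) fun w => ?_
    rw [(hderiv w).deriv]
    have := div_one_add_pow_three_le (t := a * exp (c * w)) (by positivity)
    have : 0 ≤ A * c := mul_nonneg hA hc
    nlinarith
  have := hmono hz
  simp only [mul_zero, exp_zero, mul_one, add_zero] at this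
  linarith

end ExpDecay

theorem stmt_4_general (S r η T : ℝ) (hr : 0 < r) (hrS : r < S)
    (hη : 0 < η) (hT : 0 < T)
    (F : ℝ → ℝ)
    (hF : F = fun z => S ^ 2 / (2 * (1 + (S / r - 1)⁻¹ * Real.exp (2 * η * S * T * z)) ^ 2)) :
    ∀ z ≥ (0:ℝ),
      (S - r) ^ 2 / 2 - (8 * η * S ^ 3 * T / 27) * z ≤ F z ∧ F z ≤ (S - r) ^ 2 / 2 := by
  intro z hz
  have hSr : 0 < S - r := by linarith
  have ha : (S / r - 1)⁻¹ = r / (S - r) := by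
    rw [show S / r - 1 = (S - r) / r by field_simp, inv_div]
  have hF' : F z = S ^ 2 / 2 / (1 + r / (S - r) * exp (2 * η * S * T * z)) ^ 2 := by
    rw [hF, ha, div_div]
  have hF0 : S ^ 2 / 2 / (1 + r / (S - r)) ^ 2 = (S - r) ^ 2 / 2 := by
    field_simp
    ring
  have hK : 8 * η * S ^ 3 * T / 27 = 8 * (S ^ 2 / 2) * (2 * η * S * T) / 27 := by ring
  have hA : 0 ≤ S ^ 2 / 2 := by positivity
  have ha0 : 0 ≤ r / (S - r) := by positivity
  have hc : 0 ≤ 2 * η * S * T := by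
    have : 0 < S := by linarith
    positivity
  rw [hF', ← hF0, hK]
  exact ⟨sub_le_div_one_add_mul_exp_sq hA ha0 hc hz, div_one_add_mul_exp_sq_le hA ha0 hc hz⟩

theorem stmt_4 (S r η T : ℝ) (hS : 0 < S) (hr : 0 < r) (hrS : r < S)
    (hη : 0 < η) (hT : 0 < T)
    (F : ℝ → ℝ)
    (hF : F = fun z => S ^ 2 / (2 * (1 + (S / r - 1)⁻¹ * Real.exp (2 * η * S * T * z)) ^ 2)) :
    ∀ z ≥ (0:ℝ),
      (S - r) ^ 2 / 2 - (8 * η * S ^ 3 * T / 27) * z ≤ F z ∧ F z ≤ (S - r) ^ 2 / 2 :=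
  stmt_4_general S r η T hr hrS hη hT F hF
end

section
/- Let α > 0, n_s ≥ N ≥ 1, and P_s(k) = A k^{−(α+1)} with A⁻¹ = ∑_{k=1}^{n_s} k^{−(α+1)}. Then ∑_{k=N+1}^{n_s} P_s(k) = (N^{−α} − n_s^{−α})/(α ζ(α+1)) + O(N^{−min(α+1, 2α)}), with implied constant depending only on α. -/
/-!
Comparison with `∫ x ^ (-(α + 1)) dx = (N ^ (-α) - M ^ (-α)) / α` puts the sum of `k ^ (-(α + 1))`
over `(N, M]` below that value and at most `N ^ (-(α + 1))` under it; letting `M → ∞` bounds the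
tail of `ζ(α + 1)` beyond `n_s` by `n_s ^ (-α) / α`. With `P` the sum over `(N, n_s]`, `S` the
normalising sum and `I` the integral, `|P / S - I / ζ| ≤ P (ζ - S) + |P - I|`, and
`P (ζ - S) ≤ (N ^ (-α) - n_s ^ (-α)) n_s ^ (-α) / α² ≤ N ^ (-2α) / (4α²)`.
-/

open Real Finset

section ZetaPartialSums

variable {α : ℝ}

lemma integral_rpow_neg_add_one (hα : 0 < α) {a b : ℝ} (ha : 0 < a) (hab : a ≤ b) :
    ∫ x in a..b, x ^ (-(α + 1)) = (a ^ (-α) - b ^ (-α)) / α := by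
  have h0 : (0 : ℝ) ∉ Set.uIcc a b := by
    rw [Set.uIcc_of_le hab]
    exact fun h => ha.not_ge h.1
  rw [integral_rpow (Or.inr ⟨by linarith, h0⟩), show -(α + 1) + 1 = -α by ring, div_neg,
    ← neg_div, neg_sub]

lemma antitoneOn_rpow_neg_add_one (hα : 0 < α) {a b : ℝ} (ha : 0 < a) :
    AntitoneOn (fun x : ℝ => x ^ (-(α + 1))) (Set.Icc a b) :=
  (antitoneOn_rpow_Ioi_of_exponent_nonpos (by linarith)).mono
    fun _ hx => lt_of_lt_of_le ha hx.1

lemma sum_Ioc_rpow_neg_add_one_le (hα : 0 < α) {N M : ℕ} (hN : 0 < N) (hNM : N ≤ M) :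
    ∑ k ∈ Ioc N M, (k : ℝ) ^ (-(α + 1)) ≤ ((N : ℝ) ^ (-α) - (M : ℝ) ^ (-α)) / α := by
  have hN' : (0 : ℝ) < N := Nat.cast_pos.2 hN
  rw [← integral_rpow_neg_add_one hα hN' (Nat.cast_le.2 hNM), ← Icc_add_one_left_eq_Ioc,
    ← Ico_add_one_right_eq_Icc, ← sum_Ico_add']
  exact_mod_cast (antitoneOn_rpow_neg_add_one hα hN').sum_le_integral_Ico hNM

lemma sub_rpow_neg_le_sum_Ioc_rpow_neg_add_one (hα : 0 < α) {N M : ℕ} (hN : 0 < N)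
    (hNM : N ≤ M) :
    ((N : ℝ) ^ (-α) - (M : ℝ) ^ (-α)) / α - (N : ℝ) ^ (-(α + 1)) ≤
      ∑ k ∈ Ioc N M, (k : ℝ) ^ (-(α + 1)) := by
  have hN' : (0 : ℝ) < N := Nat.cast_pos.2 hN
  have hIco : ∑ k ∈ Ico N M, (k : ℝ) ^ (-(α + 1)) ≤ ∑ k ∈ Icc N M, (k : ℝ) ^ (-(α + 1)) :=
    sum_le_sum_of_subset_of_nonneg Ico_subset_Icc_self fun k _ _ => by positivity
  rw [Icc_eq_cons_Ioc hNM, sum_cons] at hIco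
  rw [← integral_rpow_neg_add_one hα hN' (Nat.cast_le.2 hNM)]
  linarith [(antitoneOn_rpow_neg_add_one hα hN').integral_le_sum_Ico hNM]

lemma abs_sum_Ioc_rpow_neg_add_one_sub_le (hα : 0 < α) {N M : ℕ} (hN : 0 < N)
    (hNM : N ≤ M) :
    |∑ k ∈ Ioc N M, (k : ℝ) ^ (-(α + 1)) - ((N : ℝ) ^ (-α) - (M : ℝ) ^ (-α)) / α| ≤
      (N : ℝ) ^ (-(α + 1)) := by
  have hup := sum_Ioc_rpow_neg_add_one_le hα hN hNM
  have hlow := sub_rpow_neg_le_sum_Ioc_rpow_neg_add_one hα hN hNM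
  have hpos : 0 ≤ (N : ℝ) ^ (-(α + 1)) := by positivity
  rw [abs_le]
  constructor <;> linarith

lemma summable_rpow_neg_add_one (hα : 0 < α) :
    Summable fun k : ℕ => ((k : ℝ) + 1) ^ (-(α + 1)) := by
  have h := (summable_nat_add_iff 1).2 (summable_nat_rpow.2 (by linarith : -(α + 1) < -1))
  exact_mod_cast h

lemma sum_range_succ_eq_sum_Ioc {M : Type*} [AddCommMonoid M] (f : ℕ → M) (n : ℕ) :
    ∑ k ∈ range n, f (k + 1) = ∑ k ∈ Ioc 0 n, f k := by
  rw [range_eq_Ico, sum_Ico_add' f 0 n 1, ← Icc_add_one_left_eq_Ioc, Ico_add_one_right_eq_Icc]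

lemma sum_Ioc_rpow_neg_add_one_le_tsum (hα : 0 < α) (n : ℕ) :
    ∑ k ∈ Ioc 0 n, (k : ℝ) ^ (-(α + 1)) ≤ ∑' k : ℕ, ((k : ℝ) + 1) ^ (-(α + 1)) := by
  rw [← sum_range_succ_eq_sum_Ioc (fun k : ℕ => (k : ℝ) ^ (-(α + 1)))]
  push_cast
  exact (summable_rpow_neg_add_one hα).sum_le_tsum _ fun k _ => by positivity

lemma tsum_rpow_neg_add_one_le_sum_Ioc_add (hα : 0 < α) {n : ℕ} (hn : 0 < n) :
    ∑' k : ℕ, ((k : ℝ) + 1) ^ (-(α + 1)) ≤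
      ∑ k ∈ Ioc 0 n, (k : ℝ) ^ (-(α + 1)) + (n : ℝ) ^ (-α) / α := by
  refine Real.tsum_le_of_sum_range_le (fun k => by positivity) fun m => ?_
  have hsub : ∑ k ∈ Ioc 0 m, (k : ℝ) ^ (-(α + 1)) ≤ ∑ k ∈ Ioc 0 (n + m), (k : ℝ) ^ (-(α + 1)) :=
    sum_le_sum_of_subset_of_nonneg (Ioc_subset_Ioc_right (by omega)) fun k _ _ => by positivity
  have htail : ∑ k ∈ Ioc n (n + m), (k : ℝ) ^ (-(α + 1)) ≤ (n : ℝ) ^ (-α) / α := by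
    refine (sum_Ioc_rpow_neg_add_one_le hα hn (by omega)).trans ?_
    gcongr
    linarith [show (0 : ℝ) ≤ ((n + m : ℕ) : ℝ) ^ (-α) by positivity]
  rw [← sum_Ioc_consecutive _ n.zero_le (by omega : n ≤ n + m)] at hsub
  have := sum_range_succ_eq_sum_Ioc (fun k : ℕ => (k : ℝ) ^ (-(α + 1))) m
  push_cast at this
  linarith

end ZetaPartialSums

lemma abs_div_sub_div_le_mul_sub_add {P E S Z : ℝ} (hP : 0 ≤ P) (hS : 1 ≤ S) (hSZ : S ≤ Z) :
    |P / S - E / Z| ≤ P * (Z - S) + |P - E| := by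
  have hS0 : 0 < S := by linarith
  have hZ0 : 0 < Z := by linarith
  have hsplit : P / S - E / Z = P * (Z - S) / (S * Z) + (P - E) / Z := by
    field_simp
    ring
  have hmain : P * (Z - S) / (S * Z) ≤ P * (Z - S) :=
    div_le_self (mul_nonneg hP (by linarith)) (by nlinarith)
  have herr : |P - E| / Z ≤ |P - E| := div_le_self (abs_nonneg _) (by linarith)
  rw [hsplit]
  calc |P * (Z - S) / (S * Z) + (P - E) / Z|
      ≤ |P * (Z - S) / (S * Z)| + |(P - E) / Z| := abs_add_le _ _
    _ ≤ P * (Z - S) + |P - E| := by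
        rw [abs_of_nonneg (by positivity), abs_div, abs_of_pos hZ0]
        linarith

lemma rpow_neg_sub_mul_le (α : ℝ) {x : ℝ} (hx : 0 ≤ x) (b : ℝ) :
    (x ^ (-α) - b) * b ≤ x ^ (-(2 * α)) / 4 := by
  have h := four_mul_le_sq_add (x ^ (-α) - b) b
  rw [sub_add_cancel, ← rpow_natCast, ← rpow_mul hx] at h
  rw [show -(2 * α) = -α * ((2 : ℕ) : ℝ) by push_cast; ring]
  linear_combination h / 4

theorem stmt_11 (α : ℝ) (hα : 0 < α) :
    ∃ C : ℝ, ∀ N ns : ℕ, 1 ≤ N → N ≤ ns →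
      ∀ A : ℝ, A = (∑ k ∈ Finset.Icc 1 ns, (k : ℝ) ^ (-(α + 1)))⁻¹ →
      |(∑ k ∈ Finset.Icc (N + 1) ns, A * (k : ℝ) ^ (-(α + 1))) -
        ((N : ℝ) ^ (-α) - (ns : ℝ) ^ (-α)) / (α * ∑' k : ℕ, ((k : ℝ) + 1) ^ (-(α + 1)))| ≤
        C * (N : ℝ) ^ (-min (α + 1) (2 * α)) := by
  refine ⟨1 / (4 * α ^ 2) + 1, fun N ns hN hNns A hA => ?_⟩
  have hns : 0 < ns := by omega
  rw [hA, ← mul_sum, ← div_eq_inv_mul, ← div_div, Icc_add_one_left_eq_Ioc,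
    show Icc 1 ns = Ioc 0 ns from Icc_add_one_left_eq_Ioc 0 ns]
  set P := ∑ k ∈ Ioc N ns, (k : ℝ) ^ (-(α + 1))
  set S := ∑ k ∈ Ioc 0 ns, (k : ℝ) ^ (-(α + 1))
  set ζ := ∑' k : ℕ, ((k : ℝ) + 1) ^ (-(α + 1))
  set I := ((N : ℝ) ^ (-α) - (ns : ℝ) ^ (-α)) / α
  have hS : 1 ≤ S := by
    simpa only [Nat.cast_one, one_rpow] using single_le_sum (f := fun k : ℕ => (k : ℝ) ^ (-(α + 1)))
      (fun k _ => by positivity) (mem_Ioc.2 ⟨one_pos, hns⟩)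
  have hP : P ≤ I := sum_Ioc_rpow_neg_add_one_le hα hN hNns
  have hSζ : S ≤ ζ := sum_Ioc_rpow_neg_add_one_le_tsum hα ns
  have hζS : ζ - S ≤ (ns : ℝ) ^ (-α) / α := by
    linarith [tsum_rpow_neg_add_one_le_sum_Ioc_add hα hns]
  have hP0 : 0 ≤ P := by positivity
  have hN1 : (1 : ℝ) ≤ N := Nat.one_le_cast.2 hN
  calc |P / S - I / ζ|
      ≤ P * (ζ - S) + |P - I| := abs_div_sub_div_le_mul_sub_add hP0 hS hSζ
    _ ≤ I * ((ns : ℝ) ^ (-α) / α) + (N : ℝ) ^ (-(α + 1)) :=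
        add_le_add (mul_le_mul hP hζS (by linarith) (hP0.trans hP))
          (abs_sum_Ioc_rpow_neg_add_one_sub_le hα hN hNns)
    _ = ((N : ℝ) ^ (-α) - (ns : ℝ) ^ (-α)) * (ns : ℝ) ^ (-α) / α ^ 2 + (N : ℝ) ^ (-(α + 1)) := by
        ring
    _ ≤ (N : ℝ) ^ (-(2 * α)) / 4 / α ^ 2 + (N : ℝ) ^ (-(α + 1)) := by
        gcongr
        exact rpow_neg_sub_mul_le α (Nat.cast_nonneg N) _
    _ ≤ (N : ℝ) ^ (-min (α + 1) (2 * α)) / 4 / α ^ 2 + (N : ℝ) ^ (-min (α + 1) (2 * α)) := by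
        gcongr <;> simp
    _ = (1 / (4 * α ^ 2) + 1) * (N : ℝ) ^ (-min (α + 1) (2 * α)) := by
        ring
end

section
/- Let α > 0, S > 0, 0 < r < S, and let Φ(u) = S²/(2(1 + (S/r − 1)⁻¹·e^{2u})²). Then the integral ∫_Λ^∞ u^{−1/(α+1)} Φ(u) du converges for every Λ ≥ 0, and lim_{r→0⁺} (log((S−r)/r))^{−α/(α+1)} · ∫_Λ^∞ u^{−1/(α+1)} Φ(u) du = (2^{1/(α+1)} S² (α+1))/(4α) for any fixed Λ > 0. -/
/-!
Write `σ` for the logistic sigmoid, `s = -1/(α+1)` and `L = log ((S - r)/r)`, so that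
`Φ r u = S²/2 · σ(L - 2u)²`: a smoothed step that drops from `S²/2` to `0` around `u = L/2`.
The substitution `u = L v` turns `L^{-(s+1)} ∫_Λ^∞ u^s σ(L - 2u)² du` into
`∫_{Λ/L}^∞ v^s σ(L(1 - 2v))² dv`. As `L → ∞` the integrand tends to `v^s` on `(0, 1/2)` and
to `0` beyond, and for `L ≥ 1` it is dominated by `e · v^s e^{-2v}` because `σ x ≤ min 1 (e^x)`;
dominated convergence gives the limit `∫_0^{1/2} v^s dv = (1/2)^{s+1}/(s+1)`.
-/

open MeasureTheory Set Filter Topology Real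

lemma Real.sigmoid_le_exp (x : ℝ) : sigmoid x ≤ exp x := by
  have h := sigmoid_mul_rexp_neg (-x)
  rw [neg_neg] at h
  rw [← h]
  exact mul_le_of_le_one_left (exp_pos x).le (sigmoid_le_one _)

lemma Real.sigmoid_mul_le_exp {L : ℝ} (hL : 1 ≤ L) (y : ℝ) : sigmoid (L * y) ≤ exp y := by
  rcases le_or_gt 0 y with hy | hy
  · exact (sigmoid_le_one _).trans (one_le_exp hy)
  · exact (sigmoid_le_exp _).trans (exp_le_exp.2 (by nlinarith))

lemma integrableOn_rpow_mul_exp_neg_mul {s b : ℝ} (hs : -1 < s) (hb : 0 < b) :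
    IntegrableOn (fun x => x ^ s * exp (-b * x)) (Ioi 0) := by
  simpa only [rpow_one] using integrableOn_rpow_mul_exp_neg_mul_rpow hs one_pos hb

lemma continuousOn_rpow_mul_sigmoid_pow (s : ℝ) (n : ℕ) {f : ℝ → ℝ} (hf : Continuous f) :
    ContinuousOn (fun x => x ^ s * sigmoid (f x) ^ n) (Ioi 0) :=
  (continuousOn_id.rpow_const fun _ hx => Or.inl (ne_of_gt hx)).mul
    ((continuous_sigmoid.comp hf).pow n).continuousOn

lemma integrableOn_rpow_mul_sigmoid_pow {s : ℝ} (hs : -1 < s) {n : ℕ} (hn : n ≠ 0) (c : ℝ) :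
    IntegrableOn (fun u => u ^ s * sigmoid (c - 2 * u) ^ n) (Ioi 0) := by
  refine ((integrableOn_rpow_mul_exp_neg_mul hs two_pos).const_mul (exp c)).mono'
    ((continuousOn_rpow_mul_sigmoid_pow s n (by fun_prop)).aestronglyMeasurable
      measurableSet_Ioi) ?_
  refine (ae_restrict_iff' measurableSet_Ioi).2 (ae_of_all _ fun u (hu : 0 < u) => ?_)
  have hσ := sigmoid_nonneg (c - 2 * u)
  rw [norm_of_nonneg (by positivity), mul_left_comm, ← exp_add, neg_mul, ← sub_eq_add_neg]
  gcongr
  exact (pow_le_of_le_one hσ (sigmoid_le_one _) hn).trans (sigmoid_le_exp _)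

lemma setIntegral_Ioi_rpow_mul_comp_mul {s L Λ : ℝ} (hL : 0 < L) (hΛ : 0 ≤ Λ)
    (g : ℝ → ℝ) :
    ∫ u in Ioi Λ, u ^ s * g u = L ^ (s + 1) * ∫ v in Ioi (Λ / L), v ^ s * g (L * v) := by
  have hsub := integral_comp_mul_left_Ioi (fun u => u ^ s * g u) (Λ / L) hL
  rw [mul_div_cancel₀ _ hL.ne', smul_eq_mul] at hsub
  have hcongr : ∫ v in Ioi (Λ / L), (L * v) ^ s * g (L * v)
      = L ^ s * ∫ v in Ioi (Λ / L), v ^ s * g (L * v) := by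
    rw [← integral_const_mul]
    refine setIntegral_congr_fun measurableSet_Ioi fun v hv => ?_
    rw [mul_rpow hL.le ((div_nonneg hΛ hL.le).trans hv.le), mul_assoc]
  rw [rpow_add_one hL.ne', mul_comm (L ^ s) L, mul_assoc, ← hcongr, hsub,
    mul_inv_cancel_left₀ hL.ne']

lemma setIntegral_Ioi_indicator_Iio_rpow {s a : ℝ} (hs : -1 < s) (ha : 0 ≤ a) :
    ∫ v in Ioi 0, (Iio a).indicator (fun v => v ^ s) v = a ^ (s + 1) / (s + 1) := by
  rw [setIntegral_indicator measurableSet_Iio, Ioi_inter_Iio, ← integral_Ioc_eq_integral_Ioo,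
    ← intervalIntegral.integral_of_le ha, integral_rpow (Or.inl hs),
    zero_rpow (by linarith : s + 1 ≠ 0), sub_zero]

lemma tendsto_setIntegral_Ioi_div_rpow_mul_sigmoid_pow {s Λ : ℝ} (hs : -1 < s) {n : ℕ}
    (hn : n ≠ 0) (hΛ : 0 ≤ Λ) :
    Tendsto (fun L => ∫ v in Ioi (Λ / L), v ^ s * sigmoid (L * (1 - 2 * v)) ^ n) atTop
      (𝓝 (∫ v in Ioi 0, (Iio (1 / 2)).indicator (fun v => v ^ s) v)) := by
  have hindicator (L : ℝ) (hL : 0 < L) :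
      ∫ v in Ioi 0, (Ioi (Λ / L)).indicator (fun v => v ^ s * sigmoid (L * (1 - 2 * v)) ^ n) v
        = ∫ v in Ioi (Λ / L), v ^ s * sigmoid (L * (1 - 2 * v)) ^ n := by
    rw [setIntegral_indicator measurableSet_Ioi, Ioi_inter_Ioi, max_eq_right (by positivity)]
  refine Tendsto.congr' ((eventually_gt_atTop 0).mono hindicator) ?_
  refine tendsto_integral_filter_of_dominated_convergence
    (fun v => exp 1 * (v ^ s * exp (-2 * v))) ?_ ?_
    ((integrableOn_rpow_mul_exp_neg_mul hs two_pos).const_mul _) ?_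
  · exact Eventually.of_forall fun L => (((continuousOn_rpow_mul_sigmoid_pow s n
      (by fun_prop)).aestronglyMeasurable measurableSet_Ioi).indicator measurableSet_Ioi)
  · filter_upwards [eventually_ge_atTop 1] with L hL
    refine (ae_restrict_iff' measurableSet_Ioi).2 (ae_of_all _ fun v (hv : 0 < v) => ?_)
    by_cases hvΛ : v ∈ Ioi (Λ / L)
    · have hσ := sigmoid_nonneg (L * (1 - 2 * v))
      rw [indicator_of_mem hvΛ, norm_of_nonneg (by positivity), mul_left_comm, ← exp_add]
      gcongr
      refine (pow_le_of_le_one hσ (sigmoid_le_one _) hn).trans ?_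
      exact (sigmoid_mul_le_exp hL _).trans_eq (by ring_nf)
    · rw [indicator_of_notMem hvΛ, norm_zero]
      positivity
  · have hΛL : Tendsto (fun L => Λ / L) atTop (𝓝 0) := tendsto_const_nhds.div_atTop tendsto_id
    filter_upwards [ae_restrict_of_ae (compl_mem_ae_iff.2 (measure_singleton (1 / 2 : ℝ))),
      ae_restrict_mem measurableSet_Ioi] with v (hv_ne : v ≠ 1 / 2) (hv : 0 < v)
    refine Tendsto.congr' ((hΛL.eventually (eventually_lt_nhds hv)).mono fun L hL =>
      (indicator_of_mem (show v ∈ Ioi (Λ / L) from hL) _).symm) ?_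
    rcases hv_ne.lt_or_gt with hv2 | hv2
    · rw [indicator_of_mem (show v ∈ Iio (1 / 2) from hv2)]
      have h := (tendsto_sigmoid_atTop.comp
        (tendsto_id.atTop_mul_const (by linarith : (0 : ℝ) < 1 - 2 * v))).pow n
      simpa using h.const_mul (v ^ s)
    · rw [indicator_of_notMem (show v ∉ Iio (1 / 2) from not_lt.2 hv2.le)]
      have h := (tendsto_sigmoid_atBot.comp
        (tendsto_id.atTop_mul_const_of_neg (by linarith : 1 - 2 * v < 0))).pow n
      simpa [hn] using h.const_mul (v ^ s)

theorem tendsto_rpow_mul_setIntegral_rpow_mul_sigmoid_pow {s Λ : ℝ} (hs : -1 < s) {n : ℕ}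
    (hn : n ≠ 0) (hΛ : 0 ≤ Λ) :
    Tendsto (fun L => L ^ (-(s + 1)) * ∫ u in Ioi Λ, u ^ s * sigmoid (L - 2 * u) ^ n) atTop
      (𝓝 ((1 / 2) ^ (s + 1) / (s + 1))) := by
  rw [← setIntegral_Ioi_indicator_Iio_rpow hs (by norm_num)]
  refine (tendsto_setIntegral_Ioi_div_rpow_mul_sigmoid_pow hs hn hΛ).congr' ?_
  filter_upwards [eventually_gt_atTop 0] with L hL
  rw [setIntegral_Ioi_rpow_mul_comp_mul hL hΛ, ← mul_assoc, ← rpow_add hL, neg_add_cancel,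
    rpow_zero, one_mul]
  simp only [mul_sub, mul_one, mul_left_comm L 2]

lemma tendsto_log_sub_div_nhdsGT_zero {S : ℝ} (hS : 0 < S) :
    Tendsto (fun r => log ((S - r) / r)) (𝓝[>] 0) atTop := by
  refine tendsto_log_atTop.comp ?_
  refine (tendsto_atTop_add_const_right _ (-1)
    (tendsto_inv_nhdsGT_zero.const_mul_atTop hS)).congr' ?_
  filter_upwards [self_mem_nhdsWithin] with r (hr : 0 < r)
  field_simp
  ring

lemma div_two_mul_sq_eq_mul_sigmoid_sq {S r : ℝ} (hr : 0 < r) (hrS : r < S) (u : ℝ) :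
    S ^ 2 / (2 * (1 + (S / r - 1)⁻¹ * exp (2 * u)) ^ 2)
      = S ^ 2 / 2 * sigmoid (log ((S - r) / r) - 2 * u) ^ 2 := by
  have hM : exp (-log ((S - r) / r)) = (S / r - 1)⁻¹ := by
    rw [exp_neg, exp_log (div_pos (by linarith) hr), sub_div, div_self hr.ne']
  rw [sigmoid_def, neg_sub, sub_eq_add_neg (2 * u), exp_add, mul_comm (exp _), hM]
  field_simp

theorem stmt_17 (α S : ℝ) (hα : 0 < α) (hS : 0 < S)
    (Φ : ℝ → ℝ → ℝ)
    (hΦ : Φ = fun r u => S ^ 2 / (2 * (1 + (S / r - 1)⁻¹ * Real.exp (2 * u)) ^ 2)) :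
    (∀ r : ℝ, 0 < r → r < S → ∀ Λ : ℝ, 0 ≤ Λ →
      IntegrableOn (fun u => u ^ (-(1 : ℝ) / (α + 1)) * Φ r u) (Set.Ioi Λ)) ∧
    (∀ Λ : ℝ, 0 < Λ →
      Filter.Tendsto
        (fun r => (Real.log ((S - r) / r)) ^ (-α / (α + 1)) *
          ∫ u in Set.Ioi Λ, u ^ (-(1 : ℝ) / (α + 1)) * Φ r u)
        (nhdsWithin 0 (Set.Ioi 0))
        (nhds (2 ^ ((1 : ℝ) / (α + 1)) * S ^ 2 * (α + 1) / (4 * α)))) := by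
  set s := -(1 : ℝ) / (α + 1) with hs_def
  have hs : -1 < s := by
    rw [hs_def, neg_div, neg_lt_neg_iff, div_lt_one (by linarith)]
    linarith
  have hs1 : s + 1 = α / (α + 1) := by rw [hs_def]; field_simp; ring
  have hΦr (r : ℝ) (hr : 0 < r) (hrS : r < S) (u : ℝ) :
      u ^ s * Φ r u = S ^ 2 / 2 * (u ^ s * sigmoid (log ((S - r) / r) - 2 * u) ^ 2) := by
    simp only [hΦ]
    rw [div_two_mul_sq_eq_mul_sigmoid_sq hr hrS, mul_left_comm]
  refine ⟨fun r hr hrS Λ hΛ => ?_, fun Λ hΛ => ?_⟩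
  · simp only [hΦr r hr hrS]
    exact ((integrableOn_rpow_mul_sigmoid_pow hs two_ne_zero _).mono_set
      (Ioi_subset_Ioi hΛ)).const_mul _
  have hlim := ((tendsto_rpow_mul_setIntegral_rpow_mul_sigmoid_pow hs two_ne_zero hΛ.le).comp
    (tendsto_log_sub_div_nhdsGT_zero hS)).const_mul (S ^ 2 / 2)
  have hconst : S ^ 2 / 2 * ((1 / 2) ^ (s + 1) / (s + 1))
      = 2 ^ ((1 : ℝ) / (α + 1)) * S ^ 2 * (α + 1) / (4 * α) := by
    have h2 : (2 : ℝ) ^ ((1 : ℝ) / (α + 1)) * 2 ^ (α / (α + 1)) = 2 := by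
      rw [← rpow_add two_pos, ← add_div, add_comm, div_self (by positivity), rpow_one]
    rw [hs1, one_div, inv_rpow zero_le_two]
    field_simp
    linear_combination -2 * h2
  rw [← hconst, show -α / (α + 1) = -(s + 1) by rw [hs1, neg_div]]
  refine hlim.congr' ?_
  filter_upwards [self_mem_nhdsWithin, nhdsWithin_le_nhds (eventually_lt_nhds hS)]
    with r (hr : 0 < r) hrS
  simp only [Function.comp_apply, hΦr r hr hrS, integral_const_mul]
  ring
end
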